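/- Let C be a finite-dimensional 𝔽₂-vector space with two exhaustive increasing filtrations F and F' that agree after tensoring with a fixed filtered rank-2 vector space: i.e., (C, F) ⊗ (W, G) and (C', F') ⊗ (W, G) are isomorphic as filtered vector spaces, where W = 𝔽₂² has basis elements in filtration levels 0 and 1. Suppose C and C' are isomorphic graded vector spaces in which the top nonzero graded piece is one-dimensional. Then the filtration level of the top graded generator of C under F equals that of the top graded generator of C' under F'. -/

import Mathlib

/-! Tensoring with `W` adds a copy of `M` shifted up by one in degree. Since every degree of `M`
is at most `d`, the degree-`d + 1` part of `M ⊗ W` is exactly the shifted copy of the top layer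
of `M`; the shift is injective, so the isomorphism `M ⊗ W ≅ M' ⊗ W` forces `M` and `M'` to have
the same top layer, which is a single generator. -/

namespace Multiset

variable {α : Type*}

theorem filter_fst_eq_succ_add_map_shift {g : α → α} {N : Multiset (ℤ × α)} {d : ℤ}
    (hN : ∀ q ∈ N, q.1 ≤ d) :
    (N + N.map (fun q : ℤ × α => (q.1 + 1, g q.2))).filter (fun q => q.1 = d + 1)
      = (N.filter (fun q => q.1 = d)).map (fun q => (q.1 + 1, g q.2)) := by
  have hnone : N.filter (fun q => q.1 = d + 1) = 0 :=
    filter_eq_nil.mpr fun q hq hqd => by linarith [hN q hq]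
  rw [filter_add, hnone, zero_add, filter_map]
  congr 1
  exact filter_congr fun q _ => by simp only [Function.comp_apply, add_left_inj]

theorem filter_fst_eq_of_add_map_shift_eq {g : α → α} (hg : Function.Injective g)
    {N N' : Multiset (ℤ × α)} {d : ℤ} (hN : ∀ q ∈ N, q.1 ≤ d) (hN' : ∀ q ∈ N', q.1 ≤ d)
    (h : N + N.map (fun q : ℤ × α => (q.1 + 1, g q.2))
      = N' + N'.map (fun q : ℤ × α => (q.1 + 1, g q.2))) :
    N.filter (fun q => q.1 = d) = N'.filter (fun q => q.1 = d) := by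
  have hshift : Function.Injective (fun q : ℤ × α => (q.1 + 1, g q.2)) :=
    (add_left_injective 1).prodMap hg
  apply map_injective hshift
  rw [← filter_fst_eq_succ_add_map_shift hN, ← filter_fst_eq_succ_add_map_shift hN', h]

end Multiset

theorem stabilization_top_filtration_level_general
    (M M' : Multiset (ℤ × ℚ)) (d : ℤ)
    (htopM : (M.filter (fun p => p.1 = d)).card = 1)
    (hbdM : ∀ p ∈ M, p.1 ≤ d)
    (hbdM' : ∀ p ∈ M', p.1 ≤ d)
    (htens : M + M.map (fun p => (p.1 + 1, p.2 + 1))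
           = M' + M'.map (fun p => (p.1 + 1, p.2 + 1))) :
    ∀ p ∈ M, ∀ p' ∈ M', p.1 = d → p'.1 = d → p.2 = p'.2 := by
  intro p hp p' hp' hpd hp'd
  have htop := Multiset.filter_fst_eq_of_add_map_shift_eq (g := (· + 1))
    (add_left_injective 1) hbdM hbdM' htens
  obtain ⟨a, ha⟩ := Multiset.card_eq_one.mp htopM
  have hpa : p ∈ ({a} : Multiset _) := ha ▸ Multiset.mem_filter_of_mem hp hpd
  have hp'a : p' ∈ ({a} : Multiset _) := ha ▸ htop ▸ Multiset.mem_filter_of_mem hp' hp'd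
  rw [Multiset.mem_singleton.mp hpa, Multiset.mem_singleton.mp hp'a]

/-- Stabilization invariance of the filtration level of the top graded
generator. A finite-dimensional graded filtered 𝔽₂-vector space is modeled by
the multiset of `(degree, filtration level)` pairs of a basis. Tensoring with
the rank-2 filtered space `W` (basis elements in filtration levels `0` and `1`,
differing by one in grading) sends `M` to `M + M.map (fun p => (p.1+1, p.2+1))`.
If `(C,F) ⊗ W ≅ (C',F') ⊗ W` as graded filtered spaces, `C ≅ C'` as graded
spaces, and the top graded piece (in degree `d`) is one-dimensional, then the
filtration level of the top graded generator of `C` equals that of `C'`. -/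
theorem stabilization_top_filtration_level
    (M M' : Multiset (ℤ × ℚ)) (d : ℤ)
    (hdeg : M.map Prod.fst = M'.map Prod.fst)
    (htopM : (M.filter (fun p => p.1 = d)).card = 1)
    (hbdM : ∀ p ∈ M, p.1 ≤ d)
    (htopM' : (M'.filter (fun p => p.1 = d)).card = 1)
    (hbdM' : ∀ p ∈ M', p.1 ≤ d)
    (htens : M + M.map (fun p => (p.1 + 1, p.2 + 1))
           = M' + M'.map (fun p => (p.1 + 1, p.2 + 1))) :
    ∀ p ∈ M, ∀ p' ∈ M', p.1 = d → p'.1 = d → p.2 = p'.2 :=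
  stabilization_top_filtration_level_general M M' d htopM hbdM hbdM' htens
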